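/- arXiv:1406.6514 — 2 statements merged into one kernel-verified Lean document; each statement's English description precedes it below -/
import Mathlib

section
/- Under conditions (C.1)–(C.2), for the generalized tapering estimator with parameter $1 \le \tau \le p$ and generalized SURE constant $2 \le C_n = o(n)$, there exists a constant $C_0$ such that the risk $R_c(\tau) = \mathbb{E}[\mathrm{SURE}_c(\tau)]$ satisfies $R_c(\tau) \ge \frac{1}{C_0}\cdot \frac{p\,\tau\, C_n}{n}$, where the lower bound uses that $\sigma_{ii} \ge c > 0$ for all $i$; consequently $\sqrt{\mathrm{Var}_n(\tau)}/R_c(\tau) \le C \max\big(\frac{1}{\tau C_n}, \frac{1}{\sqrt{np}}\big)$ given the upper bound $\mathrm{Var}_n(\tau) \le C(\frac{p^2}{n^2} + \frac{C_n^2 p \tau^2}{n^3} + \frac{C_n p \tau}{n^2})$. -/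
/-!
With `d_ij = σ_ii σ_jj`, after clearing denominators each summand of `R_c(τ)` is
`α(w) σ_ij² + β(w) d_ij` with `α(w) ≥ 0` and `β(w) = (n-1)w²/n² + (C_n-2)w/n ≥ 0`, so dropping the `σ_ij²` parts and every pair outside the inner band only decreases the risk.
On the inner band `w = 1` and `β(1) ≥ C_n/(3n)`, while `d_ij ≥ c²`; each row has at least
`⌊τ/2⌋ + 1 ≥ τ/2` such pairs, which gives `R_c(τ) ≥ c² pτC_n/(6n)`. With `K = pτC_n/n`, each
of the three terms of the variance bound is at most `max(1/(τC_n), 1/√(np))² K²`, and dividing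
`√Var_n` by `R_c ≥ c²K/6` gives the ratio bound.
-/

open Finset

noncomputable section

/-- The risk `R_c(τ) = 𝔼[SURE_c(τ)]` of a generalized tapering estimator with
weights `w`, written via the Gaussian moment formulas
`𝔼 σ̂_ij² = n(n-1)/n² σ_ij² + (n-1)/n² σ_ii σ_jj` and
`𝔼 σ̂_ii σ̂_jj = (n-1)²/n² σ_ii σ_jj + 2(n-1)/n² σ_ij²`. -/
def Rc (p n : ℕ) (Cn : ℝ) (w : Fin p → Fin p → ℝ)
    (S : Matrix (Fin p) (Fin p) ℝ) : ℝ :=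
  let nn : ℝ := n
  let an := nn * (nn - 3) / ((nn - 1) * (nn - 2) * (nn + 1))
  let bn := nn / ((nn + 1) * (nn - 2))
  ∑ i : Fin p, ∑ j : Fin p,
    (((nn / (nn - 1) - w i j) ^ 2 + an * (Cn * w i j - nn / (nn - 1)))
        * (nn * (nn - 1) / nn ^ 2 * S i j ^ 2
            + (nn - 1) / nn ^ 2 * (S i i * S j j))
      + bn * (Cn * w i j - nn / (nn - 1))
        * ((nn - 1) ^ 2 / nn ^ 2 * (S i i * S j j)
            + 2 * (nn - 1) / nn ^ 2 * S i j ^ 2))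

/-- The `(i, j)` summand of `Rc`, with `s2 = σ_ij²` and `d = σ_ii σ_jj`. -/
def rcSummand (n Cn w s2 d : ℝ) : ℝ :=
  ((n / (n - 1) - w) ^ 2 + n * (n - 3) / ((n - 1) * (n - 2) * (n + 1)) * (Cn * w - n / (n - 1)))
      * (n * (n - 1) / n ^ 2 * s2 + (n - 1) / n ^ 2 * d)
    + n / ((n + 1) * (n - 2)) * (Cn * w - n / (n - 1))
      * ((n - 1) ^ 2 / n ^ 2 * d + 2 * (n - 1) / n ^ 2 * s2)

theorem Rc_eq_sum_rcSummand (p n : ℕ) (Cn : ℝ) (w : Fin p → Fin p → ℝ)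
    (S : Matrix (Fin p) (Fin p) ℝ) :
    Rc p n Cn w S = ∑ i, ∑ j, rcSummand n Cn (w i j) (S i j ^ 2) (S i i * S j j) :=
  rfl

section rcSummand

variable {n Cn w : ℝ} (s2 d : ℝ)

theorem rcSummand_eq (hn : 3 ≤ n) :
    rcSummand n Cn w s2 d
      = ((n - 1) / n * (n / (n - 1) - w) ^ 2 + (Cn * w - n / (n - 1)) / n) * s2
        + ((n - 1) / n ^ 2 * w ^ 2 + (Cn - 2) * w / n) * d := by
  have : n - 1 ≠ 0 := by linarith
  have : n - 2 ≠ 0 := by linarith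
  have : n + 1 ≠ 0 := by linarith
  have : n ≠ 0 := by linarith
  unfold rcSummand
  field_simp
  ring

theorem rcSummand_s2_coeff_nonneg (hn : 3 ≤ n) (hCn : 2 ≤ Cn) (hw0 : 0 ≤ w) :
    0 ≤ (n - 1) / n * (n / (n - 1) - w) ^ 2 + (Cn * w - n / (n - 1)) / n := by
  have hn1 : 0 < n - 1 := by linarith
  have key : (n - 1) / n * (n / (n - 1) - w) ^ 2 + (Cn * w - n / (n - 1)) / n
      = ((n - (n - 1) * w) ^ 2 + (n - 1) * (Cn * w) - n) / (n * (n - 1)) := by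
    field_simp
    ring
  rw [key]
  apply div_nonneg _ (by nlinarith)
  -- the numerator is at least `(n-1)((n-1)(w-1)² + 1)`
  nlinarith [sq_nonneg (w - 1), mul_nonneg (mul_nonneg (sub_nonneg.2 hCn) hw0) hn1.le]

theorem rcSummand_d_coeff_nonneg (hn : 3 ≤ n) (hCn : 2 ≤ Cn) (hw0 : 0 ≤ w) :
    0 ≤ (n - 1) / n ^ 2 * w ^ 2 + (Cn - 2) * w / n := by
  have : 0 ≤ n - 1 := by linarith
  have : 0 ≤ Cn - 2 := by linarith
  have : 0 ≤ n := by linarith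
  positivity

theorem rcSummand_d_coeff_one_ge (hn : 3 ≤ n) (hCn : 2 ≤ Cn) :
    Cn / (3 * n) ≤ (n - 1) / n ^ 2 * 1 ^ 2 + (Cn - 2) * 1 / n := by
  have hn0 : 0 < n := by linarith
  rw [div_le_iff₀ (by positivity)]
  field_simp
  nlinarith

variable {s2 d}

theorem rcSummand_ge (hn : 3 ≤ n) (hCn : 2 ≤ Cn) (hw0 : 0 ≤ w) (hs2 : 0 ≤ s2) :
    ((n - 1) / n ^ 2 * w ^ 2 + (Cn - 2) * w / n) * d ≤ rcSummand n Cn w s2 d := by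
  rw [rcSummand_eq s2 d hn]
  nlinarith [mul_nonneg (rcSummand_s2_coeff_nonneg hn hCn hw0) hs2]

theorem rcSummand_nonneg (hn : 3 ≤ n) (hCn : 2 ≤ Cn) (hw0 : 0 ≤ w)
    (hs2 : 0 ≤ s2) (hd : 0 ≤ d) : 0 ≤ rcSummand n Cn w s2 d :=
  (mul_nonneg (rcSummand_d_coeff_nonneg hn hCn hw0) hd).trans (rcSummand_ge hn hCn hw0 hs2)

theorem rcSummand_one_ge (hn : 3 ≤ n) (hCn : 2 ≤ Cn) (hs2 : 0 ≤ s2) (hd : 0 ≤ d) :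
    Cn / (3 * n) * d ≤ rcSummand n Cn 1 s2 d :=
  (mul_le_mul_of_nonneg_right (rcSummand_d_coeff_one_ge hn hCn) hd).trans
    (rcSummand_ge hn hCn zero_le_one hs2)

end rcSummand

theorem card_filter_natAbs_sub_le {p k : ℕ} (hk : k < p) (i : Fin p) :
    k + 1 ≤ #{j : Fin p | ((i : ℤ) - (j : ℤ)).natAbs ≤ k} := by
  set a := min (i : ℕ) (p - 1 - k)
  have hsub : Icc (⟨a, by omega⟩ : Fin p) ⟨a + k, by omega⟩
      ⊆ ({j : Fin p | ((i : ℤ) - (j : ℤ)).natAbs ≤ k} : Finset (Fin p)) := by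
    intro j hj
    simp only [mem_Icc, Fin.le_def] at hj
    simp only [mem_filter, mem_univ, true_and]
    omega
  have := card_le_card hsub
  simp only [Fin.card_Icc] at this
  omega

theorem Rc_ge {p n τ : ℕ} {Cn c : ℝ} {S : Matrix (Fin p) (Fin p) ℝ} {w : Fin p → Fin p → ℝ}
    (hn : 3 ≤ n) (hτp : τ ≤ p) (hCn : 2 ≤ Cn) (hc : 0 ≤ c) (hdiag : ∀ i, c ≤ S i i)
    (hw_band : ∀ i j : Fin p, ((i : ℤ) - (j : ℤ)).natAbs ≤ τ / 2 → w i j = 1)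
    (hw0 : ∀ i j, 0 ≤ w i j) :
    c ^ 2 * (p * τ * Cn) / (6 * n) ≤ Rc p n Cn w S := by
  have hn' : (3 : ℝ) ≤ n := by exact_mod_cast hn
  have hd : ∀ i j, c ^ 2 ≤ S i i * S j j := fun i j =>
    pow_two c ▸ mul_le_mul (hdiag i) (hdiag j) hc (hc.trans (hdiag i))
  have hd0 : ∀ i j, 0 ≤ S i i * S j j := fun i j => (sq_nonneg c).trans (hd i j)
  set m := Cn / (3 * n) * c ^ 2
  have hm : 0 ≤ m := mul_nonneg (div_nonneg (by linarith) (by positivity)) (sq_nonneg c)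
  have row : ∀ i, ((τ / 2 + 1 : ℕ) : ℝ) * m
      ≤ ∑ j, rcSummand n Cn (w i j) (S i j ^ 2) (S i i * S j j) := by
    intro i
    set band : Finset (Fin p) := {j | ((i : ℤ) - (j : ℤ)).natAbs ≤ τ / 2}
    calc ((τ / 2 + 1 : ℕ) : ℝ) * m ≤ #band * m := by
          gcongr
          exact card_filter_natAbs_sub_le (by have := i.isLt; omega) i
      _ ≤ ∑ j ∈ band, rcSummand n Cn (w i j) (S i j ^ 2) (S i i * S j j) := by
          rw [← nsmul_eq_mul]
          refine card_nsmul_le_sum _ _ _ fun j hj => ?_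
          rw [hw_band i j (mem_filter.1 hj).2]
          exact (mul_le_mul_of_nonneg_left (hd i j) (by positivity)).trans
            (rcSummand_one_ge hn' hCn (sq_nonneg _) (hd0 i j))
      _ ≤ _ := sum_le_sum_of_subset_of_nonneg (filter_subset _ _) fun j _ _ =>
          rcSummand_nonneg hn' hCn (hw0 i j) (sq_nonneg _) (hd0 i j)
  have hτ : (τ : ℝ) ≤ 2 * ((τ / 2 + 1 : ℕ) : ℝ) := by
    exact_mod_cast (by omega : τ ≤ 2 * (τ / 2 + 1))
  calc c ^ 2 * (p * τ * Cn) / (6 * n) = p * ((τ : ℝ) / 2 * m) := by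
        unfold m; field_simp; ring
    _ ≤ p * (((τ / 2 + 1 : ℕ) : ℝ) * m) := by
        gcongr
        linarith
    _ = ∑ _i : Fin p, ((τ / 2 + 1 : ℕ) : ℝ) * m := by simp
    _ ≤ Rc p n Cn w S := by
        rw [Rc_eq_sum_rcSummand]
        exact sum_le_sum fun i _ => row i

theorem variance_bound_le (p n τ Cn : ℝ) (hn : 0 < n) (hnp : n ≤ p) (hτ : 0 < τ)
    (hCn : 0 < Cn) :
    p ^ 2 / n ^ 2 + Cn ^ 2 * p * τ ^ 2 / n ^ 3 + Cn * p * τ / n ^ 2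
      ≤ 3 * (max (1 / (τ * Cn)) (1 / √(n * p)) * (p * τ * Cn / n)) ^ 2 := by
  set M := max (1 / (τ * Cn)) (1 / √(n * p))
  have hp : 0 < p := hn.trans_le hnp
  have hM₁ : 1 / (τ * Cn) ^ 2 ≤ M ^ 2 := by
    rw [← one_div_pow]
    exact pow_le_pow_left₀ (by positivity) (le_max_left _ _) 2
  have hM₂ : 1 / (n * p) ≤ M ^ 2 := by
    rw [← Real.sq_sqrt (by positivity : 0 ≤ n * p), ← one_div_pow]
    exact pow_le_pow_left₀ (by positivity) (le_max_right _ _) 2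
  -- `pτC_n ≥ min((τC_n)², np)` because `n ≤ p`
  have hM₃ : 1 / (p * τ * Cn) ≤ M ^ 2 := by
    rcases le_total (τ * Cn) n with h | h
    · refine le_trans (one_div_le_one_div_of_le (by positivity) ?_) hM₁
      nlinarith [mul_le_mul_of_nonneg_left (h.trans hnp) (by positivity : 0 ≤ τ * Cn)]
    · refine le_trans (one_div_le_one_div_of_le (by positivity) ?_) hM₂
      nlinarith [mul_le_mul_of_nonneg_left h hp.le]
  calc p ^ 2 / n ^ 2 + Cn ^ 2 * p * τ ^ 2 / n ^ 3 + Cn * p * τ / n ^ 2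
      = (1 / (τ * Cn) ^ 2 + 1 / (n * p) + 1 / (p * τ * Cn)) * (p * τ * Cn / n) ^ 2 := by
        field_simp
    _ ≤ (M ^ 2 + M ^ 2 + M ^ 2) * (p * τ * Cn / n) ^ 2 := by gcongr
    _ = 3 * (M * (p * τ * Cn / n)) ^ 2 := by ring

theorem sqrt_div_le_of_le_sq_mul {V R K C₀ A M : ℝ} (hA : 0 ≤ A) (hC₀ : 0 < C₀) (hK : 0 < K)
    (hM : 0 ≤ M) (hR : K / C₀ ≤ R) (hV : V ≤ A * (M * K) ^ 2) :
    √V / R ≤ C₀ * √A * M := by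
  have hR0 : 0 < R := (div_pos hK hC₀).trans_le hR
  rw [div_le_iff₀ hR0]
  calc √V ≤ √(A * (M * K) ^ 2) := Real.sqrt_le_sqrt hV
    _ = √A * (M * K) := by rw [Real.sqrt_mul hA, Real.sqrt_sq (by positivity)]
    _ = C₀ * √A * M * (K / C₀) := by field_simp
    _ ≤ C₀ * √A * M * R := by gcongr

theorem stmt14_general (c M₀ : ℝ) (hc : 0 < c)
    (C₁ : ℝ) (hC₁ : 0 < C₁) :
    ∃ C₀ C : ℝ, 0 < C₀ ∧ 0 < C ∧
      ∀ (p n τ : ℕ), 3 ≤ n → n ≤ p → 1 ≤ τ → τ ≤ p →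
      ∀ (Cn : ℝ), 2 ≤ Cn → Cn ≤ n →
      ∀ (S : Matrix (Fin p) (Fin p) ℝ), S.IsSymm →
        (∀ v : Fin p → ℝ, 0 ≤ ∑ i, ∑ j, v i * S i j * v j) →
        (∀ v : Fin p → ℝ, ∑ i, ∑ j, v i * S i j * v j ≤ M₀ * ∑ i, v i ^ 2) →
        (∀ i : Fin p, c ≤ S i i) →
      ∀ (w : Fin p → Fin p → ℝ),
        (∀ i j : Fin p, ((i : ℤ) - (j : ℤ)).natAbs ≤ τ / 2 → w i j = 1) →
        (∀ i j : Fin p, (τ : ℤ) ≤ ((i : ℤ) - (j : ℤ)).natAbs → w i j = 0) →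
        (∀ i j : Fin p, 0 ≤ w i j ∧ w i j ≤ 1) →
      ((p : ℝ) * τ * Cn / (C₀ * n) ≤ Rc p n Cn w S
        ∧ ∀ V : ℝ, 0 ≤ V →
            V ≤ C₁ * ((p : ℝ) ^ 2 / (n : ℝ) ^ 2
                + Cn ^ 2 * p * (τ : ℝ) ^ 2 / (n : ℝ) ^ 3
                + Cn * p * τ / (n : ℝ) ^ 2) →
            Real.sqrt V / Rc p n Cn w S
              ≤ C * max (1 / ((τ : ℝ) * Cn)) (1 / Real.sqrt ((n : ℝ) * p))) := by
  refine ⟨6 / c ^ 2, 6 / c ^ 2 * √(3 * C₁), by positivity, by positivity, ?_⟩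
  intro p n τ hn hnp hτ hτp Cn hCn _ S _ _ _ hdiag w hw_band _ hw
  have hn' : (0 : ℝ) < n := by exact_mod_cast (by omega : 0 < n)
  have hK : (0 : ℝ) < p * τ * Cn / n := by
    have : (0 : ℝ) < p := by exact_mod_cast (by omega : 0 < p)
    have : (0 : ℝ) < τ := by exact_mod_cast hτ
    have : (0 : ℝ) < Cn := by linarith
    positivity
  have hR : (p : ℝ) * τ * Cn / n / (6 / c ^ 2) ≤ Rc p n Cn w S := by
    refine le_of_eq_of_le ?_ (Rc_ge hn hτp hCn hc.le hdiag hw_band fun i j => (hw i j).1)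
    field_simp
  refine ⟨by rwa [div_div, mul_comm (n : ℝ)] at hR, fun V _ hV => ?_⟩
  refine sqrt_div_le_of_le_sq_mul (by positivity) (by positivity) hK (by positivity) hR ?_
  have hvar := variance_bound_le p n τ Cn hn' (by exact_mod_cast hnp) (by exact_mod_cast hτ)
    (by linarith)
  calc V ≤ C₁ * (3 * _) := hV.trans (by gcongr)
    _ = 3 * C₁ * _ := by ring

/-- Under (C.1)–(C.2) with generalized tapering weights and `2 ≤ C_n ≤ n`,
there is `C₀` with `R_c(τ) ≥ pτC_n/(C₀ n)` (using `σ_ii ≥ c > 0`), and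
consequently, given the upper bound
`Var_n(τ) ≤ C₁(p²/n² + C_n²pτ²/n³ + C_n pτ/n²)`, there is `C` with
`√Var_n(τ)/R_c(τ) ≤ C max(1/(τC_n), 1/√(np))`. -/
theorem stmt14 (c M₀ : ℝ) (hc : 0 < c) (hM₀ : 0 < M₀)
    (C₁ : ℝ) (hC₁ : 0 < C₁) :
    ∃ C₀ C : ℝ, 0 < C₀ ∧ 0 < C ∧
      ∀ (p n τ : ℕ), 3 ≤ n → n ≤ p → 1 ≤ τ → τ ≤ p →
      ∀ (Cn : ℝ), 2 ≤ Cn → Cn ≤ n →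
      ∀ (S : Matrix (Fin p) (Fin p) ℝ), S.IsSymm →
        (∀ v : Fin p → ℝ, 0 ≤ ∑ i, ∑ j, v i * S i j * v j) →
        (∀ v : Fin p → ℝ, ∑ i, ∑ j, v i * S i j * v j ≤ M₀ * ∑ i, v i ^ 2) →
        (∀ i : Fin p, c ≤ S i i) →
      ∀ (w : Fin p → Fin p → ℝ),
        (∀ i j : Fin p, ((i : ℤ) - (j : ℤ)).natAbs ≤ τ / 2 → w i j = 1) →
        (∀ i j : Fin p, (τ : ℤ) ≤ ((i : ℤ) - (j : ℤ)).natAbs → w i j = 0) →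
        (∀ i j : Fin p, 0 ≤ w i j ∧ w i j ≤ 1) →
      ((p : ℝ) * τ * Cn / (C₀ * n) ≤ Rc p n Cn w S
        ∧ ∀ V : ℝ, 0 ≤ V →
            V ≤ C₁ * ((p : ℝ) ^ 2 / (n : ℝ) ^ 2
                + Cn ^ 2 * p * (τ : ℝ) ^ 2 / (n : ℝ) ^ 3
                + Cn * p * τ / (n : ℝ) ^ 2) →
            Real.sqrt V / Rc p n Cn w S
              ≤ C * max (1 / ((τ : ℝ) * Cn)) (1 / Real.sqrt ((n : ℝ) * p))) :=
  stmt14_general c M₀ hc C₁ hC₁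
end
end

section
/- Under (C.1), (C.3), (C.4), (C.5) with banding weights $\omega_{ij}^{(\tau)} = \mathbf{1}(|i-j| < \tau)$, let $\tau_0$ be the unique minimizer of $R(\tau) = \sum_{|i-j|<\tau}(\frac{1}{n}\sigma_{ij}^2 + \frac{n-1}{n^2}\sigma_{ii}\sigma_{jj}) + \sum_{|i-j|\ge\tau}\sigma_{ij}^2$. Then $\sum_{|i-j|=\tau_0}\sigma_{ij}^2 < \sum_{|i-j|=\tau_0}\frac{1}{n}\sigma_{ii}\sigma_{jj}$ and $\sum_{|i-j|=\tau_0}\frac{1}{n}\sigma_{ii}\sigma_{jj} < \sum_{|i-j|=\tau_0-1}\sigma_{ij}^2$; moreover, under the decay condition $|\sigma_{ij}| \le M_1|i-j|^{-(\alpha+1)}$, there exists $C$ such that $\tau_0 \le C n^{1/(2(\alpha+1))}$. -/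
/-!
Widening the band from `τ` to `τ + 1` replaces the bias `σ_ij²` on the `τ`-th diagonals by the
variance `σ_ij²/n + (n-1)σ_ii σ_jj/n²`, so `R(τ+1) - R(τ) = (n-1)/n · (∑_{|i-j|=τ} σ_ii σ_jj/n -
∑_{|i-j|=τ} σ_ij²)`. Comparing `R(τ₀)` with `R(τ₀ ± 1)` gives the two inequalities. With
`σ_ii = 1` the first sum is `2(p-τ)/n`, while the decay condition bounds the second by
`2(p-τ) M₁² τ^{-2(α+1)}`; at `τ = τ₀ - 1` this forces `(τ₀ - 1)^{2(α+1)} < M₁² n`.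
-/

open Finset

noncomputable section

/-- The banding Frobenius risk `R(τ)`. -/
def bandRisk (p n : ℕ) (S : Matrix (Fin p) (Fin p) ℝ) (τ : ℕ) : ℝ :=
  ∑ i : Fin p, ∑ j : Fin p,
    if ((i : ℤ) - (j : ℤ)).natAbs < τ
    then (1 / (n : ℝ)) * S i j ^ 2 + ((n : ℝ) - 1) / (n : ℝ) ^ 2 * (S i i * S j j)
    else S i j ^ 2

lemma lt_mul_rpow_of_inv_lt_sq {a M x y : ℝ} (ha : 0 < a) (hM : 0 ≤ M) (hx : 0 < x)
    (hy : 0 < y) (h : y⁻¹ < (M * x ^ (-a)) ^ 2) :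
    x < M ^ (1 / a) * y ^ (1 / (2 * a)) := by
  have hsq : (x ^ a) ^ 2 < (M * √y) ^ 2 := by
    rw [Real.rpow_neg hx.le, mul_pow, inv_pow, ← div_eq_mul_inv,
      inv_lt_iff_one_lt_mul₀ hy, div_mul_eq_mul_div, one_lt_div (by positivity)] at h
    rwa [mul_pow, Real.sq_sqrt hy.le]
  have hlt : x ^ a < M * √y := lt_of_pow_lt_pow_left₀ 2 (by positivity) hsq
  have hroot : M ^ (1 / a) * y ^ (1 / (2 * a)) = (M * √y) ^ a⁻¹ := by
    rw [Real.mul_rpow hM (Real.sqrt_nonneg y), Real.sqrt_eq_rpow, ← Real.rpow_mul hy.le,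
      one_div, one_div, one_div, mul_inv, mul_comm (2 : ℝ)⁻¹]
  rwa [hroot, Real.lt_rpow_inv_iff_of_pos hx.le (by positivity) ha]

lemma sum_range_ite_natAbs_sub_eq (p k : ℕ) (hk : 1 ≤ k) :
    ∑ j ∈ range p, (if ((p : ℤ) - j).natAbs = k then (1 : ℝ) else 0) =
      if k ≤ p then 1 else 0 := by
  split_ifs with hkp
  · rw [sum_eq_single_of_mem (p - k) (mem_range.mpr (by omega)) fun j hj hne => by
      rw [mem_range] at hj; rw [if_neg (by omega)], if_pos (by omega)]
  · exact sum_eq_zero fun j hj => by rw [mem_range] at hj; rw [if_neg (by omega)]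

lemma sum_range_sum_range_ite_natAbs_sub_eq (p k : ℕ) (hk : 1 ≤ k) :
    ∑ i ∈ range p, ∑ j ∈ range p, (if ((i : ℤ) - j).natAbs = k then (1 : ℝ) else 0) =
      2 * (p - k : ℕ) := by
  induction p with
  | zero => simp
  | succ p ih =>
    have hrow := sum_range_ite_natAbs_sub_eq p k hk
    have hcol : ∑ i ∈ range p, (if ((i : ℤ) - p).natAbs = k then (1 : ℝ) else 0) =
        if k ≤ p then 1 else 0 := by
      simpa only [← Int.natAbs_neg (_ - (p : ℤ)), neg_sub] using hrow
    simp only [sum_range_succ, sum_add_distrib, ih, hrow, hcol, sub_self, Int.natAbs_zero,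
      if_neg (by omega : 0 ≠ k)]
    split_ifs with hkp
    · rw [Nat.sub_add_comm hkp]; push_cast; ring
    · rw [Nat.sub_eq_zero_of_le (by omega), Nat.sub_eq_zero_of_le (by omega)]; simp

/-- `∑_{|i-j|=k} f i j`: the sum of `f` over the `k`-th sub- and superdiagonal. -/
def diagSum {p : ℕ} (f : Fin p → Fin p → ℝ) (k : ℕ) : ℝ :=
  ∑ i : Fin p, ∑ j : Fin p, if ((i : ℤ) - (j : ℤ)).natAbs = k then f i j else 0

section diagSum

variable {p : ℕ}

lemma diagSum_zero (f : Fin p → Fin p → ℝ) : diagSum f 0 = ∑ i, f i i := by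
  refine sum_congr rfl fun i _ => ?_
  rw [sum_eq_single_of_mem i (mem_univ i) fun j _ hji => if_neg fun h => hji (by omega),
    if_pos (by simp)]

lemma diagSum_const (c : ℝ) {k : ℕ} (hk : 1 ≤ k) :
    diagSum (fun _ _ : Fin p => c) k = 2 * (p - k : ℕ) * c := by
  have hfactor : diagSum (fun _ _ : Fin p => c) k =
      (∑ i : Fin p, ∑ j : Fin p, if ((i : ℤ) - j).natAbs = k then (1 : ℝ) else 0) * c := by
    simp only [diagSum, sum_mul, ite_mul, one_mul, zero_mul]
  rw [hfactor, ← sum_range_sum_range_ite_natAbs_sub_eq p k hk]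
  simp only [sum_range]

lemma diagSum_le_diagSum {f g : Fin p → Fin p → ℝ} {k : ℕ}
    (h : ∀ i j : Fin p, ((i : ℤ) - j).natAbs = k → f i j ≤ g i j) : diagSum f k ≤ diagSum g k :=
  sum_le_sum fun i _ => sum_le_sum fun j _ => by
    split_ifs with hij
    exacts [h i j hij, le_rfl]

lemma diagSum_sq_le {f : Fin p → Fin p → ℝ} {k : ℕ} (hk : 1 ≤ k) {b : ℝ}
    (h : ∀ i j : Fin p, ((i : ℤ) - j).natAbs = k → |f i j| ≤ b) :
    diagSum (fun i j => f i j ^ 2) k ≤ 2 * (p - k : ℕ) * b ^ 2 := by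
  rw [← diagSum_const _ hk]
  exact diagSum_le_diagSum fun i j hij => sq_le_sq' (abs_le.mp (h i j hij)).1
    (abs_le.mp (h i j hij)).2

end diagSum

section bandRisk

variable {p n : ℕ} {S : Matrix (Fin p) (Fin p) ℝ} {τ : ℕ}

lemma bandRisk_succ_sub_bandRisk (hn : (n : ℝ) ≠ 0) :
    bandRisk p n S (τ + 1) - bandRisk p n S τ =
      ((n : ℝ) - 1) / n * (diagSum (fun i j => 1 / (n : ℝ) * (S i i * S j j)) τ -
        diagSum (fun i j => S i j ^ 2) τ) := by
  simp only [bandRisk, diagSum, ← sum_sub_distrib, mul_sum]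
  refine sum_congr rfl fun i _ => sum_congr rfl fun j _ => ?_
  rcases lt_trichotomy ((i : ℤ) - j).natAbs τ with h | h | h
  · simp only [if_pos h, if_pos (h.trans (Nat.lt_succ_self τ)), if_neg h.ne]
    ring
  · simp only [h, lt_irrefl, if_false, Nat.lt_succ_self, if_true]
    field_simp
    ring
  · simp only [if_neg h.not_gt, if_neg (Nat.not_lt.mpr h), if_neg h.ne']
    ring

lemma diagSum_sq_lt_of_bandRisk_lt_succ (hn : 1 < n)
    (h : bandRisk p n S τ < bandRisk p n S (τ + 1)) :
    diagSum (fun i j => S i j ^ 2) τ < diagSum (fun i j => 1 / (n : ℝ) * (S i i * S j j)) τ := by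
  have hn' : (1 : ℝ) < n := by exact_mod_cast hn
  rw [← sub_pos, bandRisk_succ_sub_bandRisk (by positivity)] at h
  exact sub_pos.mp (pos_of_mul_pos_right h (div_pos (by linarith) (by linarith)).le)

lemma lt_diagSum_sq_of_bandRisk_succ_lt (hn : 1 < n)
    (h : bandRisk p n S (τ + 1) < bandRisk p n S τ) :
    diagSum (fun i j => 1 / (n : ℝ) * (S i i * S j j)) τ < diagSum (fun i j => S i j ^ 2) τ := by
  have hn' : (1 : ℝ) < n := by exact_mod_cast hn
  rw [← sub_neg, bandRisk_succ_sub_bandRisk (by positivity)] at h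
  exact sub_neg.mp (neg_of_mul_neg_right h (div_pos (by linarith) (by linarith)).le)

end bandRisk

theorem stmt19_general (M₀ M₁ α γ : ℝ) (hM₁ : 0 < M₁) (hα : 0 < α) :
    ∃ C : ℝ, 0 < C ∧
      ∀ (n p τ₀ : ℕ), 2 ≤ n → n ≤ p → 1 ≤ τ₀ → τ₀ < p →
      ∀ (S : Matrix (Fin p) (Fin p) ℝ), S.IsSymm →
        (∀ v : Fin p → ℝ, 0 ≤ ∑ i, ∑ j, v i * S i j * v j) →
        (∀ v : Fin p → ℝ, ∑ i, ∑ j, v i * S i j * v j ≤ M₀ * ∑ i, v i ^ 2) →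
        (∀ i j : Fin p, i ≠ j →
            |S i j| ≤ M₁ * ((((i : ℤ) - (j : ℤ)).natAbs : ℝ)) ^ (-(α + 1))) →
        (∀ k : ℕ,
            γ * (∑ i : Fin p, ∑ j : Fin p,
                if ((i : ℤ) - (j : ℤ)).natAbs = k + 1 then S i j ^ 2 else 0)
              ≤ ∑ i : Fin p, ∑ j : Fin p,
                  if ((i : ℤ) - (j : ℤ)).natAbs = k then S i j ^ 2 else 0) →
        (∀ i : Fin p, S i i = 1) →
        (∀ τ : ℕ, 1 ≤ τ → τ ≤ p → τ ≠ τ₀ →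
            bandRisk p n S τ₀ < bandRisk p n S τ) →
        ((∑ i : Fin p, ∑ j : Fin p,
            if ((i : ℤ) - (j : ℤ)).natAbs = τ₀ then S i j ^ 2 else 0)
          < ∑ i : Fin p, ∑ j : Fin p,
              if ((i : ℤ) - (j : ℤ)).natAbs = τ₀
              then (1 / (n : ℝ)) * (S i i * S j j) else 0)
        ∧ ((∑ i : Fin p, ∑ j : Fin p,
            if ((i : ℤ) - (j : ℤ)).natAbs = τ₀
            then (1 / (n : ℝ)) * (S i i * S j j) else 0)
          < ∑ i : Fin p, ∑ j : Fin p,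
              if ((i : ℤ) - (j : ℤ)).natAbs = τ₀ - 1 then S i j ^ 2 else 0)
        ∧ (τ₀ : ℝ) ≤ C * (n : ℝ) ^ ((1 : ℝ) / (2 * (α + 1))) := by
  refine ⟨M₁ ^ (1 / (α + 1)) + 1, by positivity, ?_⟩
  intro n p τ₀ hn _ hτ₀ hτ₀p S _ _ _ hdecay _ hdiag hmin
  obtain ⟨k, rfl⟩ : ∃ k, τ₀ = k + 1 := ⟨τ₀ - 1, by omega⟩
  have hn' : (2 : ℝ) ≤ n := by exact_mod_cast hn
  have hvar : ∀ m, 1 ≤ m →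
      diagSum (fun i j => 1 / (n : ℝ) * (S i i * S j j)) m = 2 * (p - m : ℕ) * (1 / n) :=
    fun m hm => by simpa only [hdiag, mul_one] using diagSum_const (p := p) (1 / (n : ℝ)) hm
  have hroot : 1 ≤ (n : ℝ) ^ (1 / (2 * (α + 1))) := Real.one_le_rpow (by linarith) (by positivity)
  refine ⟨diagSum_sq_lt_of_bandRisk_lt_succ hn (hmin _ (by omega) (by omega) (by omega)), ?_⟩
  rcases Nat.eq_zero_or_pos k with rfl | hk
  · have hp : (2 : ℝ) ≤ p := by exact_mod_cast (by omega : 2 ≤ p)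
    have hdiag0 : diagSum (fun i j => S i j ^ 2) 0 = p := by simp [diagSum_zero, hdiag]
    refine ⟨?_, ?_⟩
    · show diagSum _ 1 < diagSum _ 0
      rw [hvar 1 le_rfl, hdiag0, Nat.cast_sub (by omega), Nat.cast_one]
      have : 1 / (n : ℝ) ≤ 1 / 2 := by gcongr
      nlinarith
    · push_cast
      nlinarith [Real.rpow_pos_of_pos hM₁ (1 / (α + 1))]
  · have hbias := lt_diagSum_sq_of_bandRisk_succ_lt hn (hmin k hk (by omega) (by omega))
    rw [hvar k hk] at hbias
    refine ⟨?_, ?_⟩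
    · show diagSum _ (k + 1) < diagSum _ k
      rw [hvar (k + 1) (by omega)]
      refine lt_of_le_of_lt ?_ hbias
      gcongr
      omega
    · have hdecay_k := diagSum_sq_le hk fun i j (hij : ((i : ℤ) - j).natAbs = k) => by
        simpa only [hij] using hdecay i j (by rintro rfl; simp at hij; omega)
      have hpk : (0 : ℝ) < 2 * (p - k : ℕ) := by exact_mod_cast (by omega : 0 < 2 * (p - k))
      have hlt := lt_mul_rpow_of_inv_lt_sq (by positivity : 0 < α + 1) hM₁.le
        (by exact_mod_cast hk : (0 : ℝ) < k) (by positivity : (0 : ℝ) < n)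
        (by rw [← one_div]; exact lt_of_mul_lt_mul_left (hbias.trans_le hdecay_k) hpk.le)
      push_cast
      nlinarith

/-- Under (C.3)–(C.5), if `τ₀` is the unique minimizer of the banding risk
`R(τ)` over `{1,…,p}`, then
`∑_{|i-j|=τ₀} σ_ij² < ∑_{|i-j|=τ₀} σ_ii σ_jj / n < ∑_{|i-j|=τ₀-1} σ_ij²`,
and there is a constant `C` (depending only on the class parameters) with
`τ₀ ≤ C n^{1/(2(α+1))}`. -/
theorem stmt19 (M₀ M₁ α γ : ℝ) (hM₀ : 0 < M₀) (hM₁ : 0 < M₁) (hα : 0 < α)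
    (hγ : 1 < γ) :
    ∃ C : ℝ, 0 < C ∧
      ∀ (n p τ₀ : ℕ), 2 ≤ n → n ≤ p → 1 ≤ τ₀ → τ₀ < p →
      ∀ (S : Matrix (Fin p) (Fin p) ℝ), S.IsSymm →
        (∀ v : Fin p → ℝ, 0 ≤ ∑ i, ∑ j, v i * S i j * v j) →
        (∀ v : Fin p → ℝ, ∑ i, ∑ j, v i * S i j * v j ≤ M₀ * ∑ i, v i ^ 2) →
        (∀ i j : Fin p, i ≠ j →
            |S i j| ≤ M₁ * ((((i : ℤ) - (j : ℤ)).natAbs : ℝ)) ^ (-(α + 1))) →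
        (∀ k : ℕ,
            γ * (∑ i : Fin p, ∑ j : Fin p,
                if ((i : ℤ) - (j : ℤ)).natAbs = k + 1 then S i j ^ 2 else 0)
              ≤ ∑ i : Fin p, ∑ j : Fin p,
                  if ((i : ℤ) - (j : ℤ)).natAbs = k then S i j ^ 2 else 0) →
        (∀ i : Fin p, S i i = 1) →
        (∀ τ : ℕ, 1 ≤ τ → τ ≤ p → τ ≠ τ₀ →
            bandRisk p n S τ₀ < bandRisk p n S τ) →
        ((∑ i : Fin p, ∑ j : Fin p,
            if ((i : ℤ) - (j : ℤ)).natAbs = τ₀ then S i j ^ 2 else 0)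
          < ∑ i : Fin p, ∑ j : Fin p,
              if ((i : ℤ) - (j : ℤ)).natAbs = τ₀
              then (1 / (n : ℝ)) * (S i i * S j j) else 0)
        ∧ ((∑ i : Fin p, ∑ j : Fin p,
            if ((i : ℤ) - (j : ℤ)).natAbs = τ₀
            then (1 / (n : ℝ)) * (S i i * S j j) else 0)
          < ∑ i : Fin p, ∑ j : Fin p,
              if ((i : ℤ) - (j : ℤ)).natAbs = τ₀ - 1 then S i j ^ 2 else 0)
        ∧ (τ₀ : ℝ) ≤ C * (n : ℝ) ^ ((1 : ℝ) / (2 * (α + 1))) :=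
  stmt19_general M₀ M₁ α γ hM₁ hα

end
end
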